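/- Let ν ∈ ℝ and β = (1+ν)/2. For every t ∈ ℝ, although the individual terms blow up like 1/s² along the diagonal, lim_{s→0, s≠0} [ G^B_{n_x n_x n_x n_y} + (2−ν) G^B_{n_x τ_x τ_x n_y} + (1−ν)κ(t)·( G^B_{τ_x τ_x n_y} − G^B_{n_x n_x n_y} ) − (β/2)·K^{H′} ](γ(t), γ(t+s)) = (1−ν)κ(t)²/(8π), where K^{H′}(x, γ(s′)) = (1/π)(τ(s′)·τ(t))/‖x−γ(s′)‖² − (2/π)·[(x−γ(s′))·τ(t)]·[(x−γ(s′))·τ(s′)]/‖x−γ(s′)‖⁴ is the kernel of the arc-length derivative of the Hilbert transform, and the x-derivatives are taken in the directions n(t), τ(t). -/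

import Mathlib

/-!
Away from the diagonal every derivative of `G^B` that occurs is an explicit rational function of
`w = x − y` (the logarithms only survive in the first two derivatives), so the kernel is an
algebraic expression in the coordinates of `w = γ(t) − γ(t+s)` and `τ(t+s)` in the frame
`(τ(t), n(t))`. Taylor expansion gives `w = s a τ + s² b n` and `τ(t+s) = c τ + s d n` with
`a → −1`, `b → κ/2`, `c → 1`, `d → −κ`. In these blown-up coordinates the kernel equals
`(1 − ν) P / (16π (a² + s² b²)³)` for a polynomial `P`: with `β = (1 + ν)/2` the `s⁻²` and `s⁻¹`
singularities of the four terms cancel identically, and the limit is read off at `s = 0`.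
-/

open Real Filter Topology MeasureTheory

noncomputable section

/-- Euclidean dot product on `ℝ × ℝ`. -/
def dot2 (v w : ℝ × ℝ) : ℝ := v.1 * w.1 + v.2 * w.2

/-- Unit tangent vector `τ(s) = γ′(s)`. -/
def tang (γ : ℝ → ℝ × ℝ) (s : ℝ) : ℝ × ℝ := deriv γ s

/-- Unit normal vector `n(s) = (τ₂(s), −τ₁(s))`. -/
def nor (γ : ℝ → ℝ × ℝ) (s : ℝ) : ℝ × ℝ := ((deriv γ s).2, -(deriv γ s).1)

/-- Signed curvature `κ(s) = −γ″(s)·n(s)`. -/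
def curv (γ : ℝ → ℝ × ℝ) (s : ℝ) : ℝ := -(dot2 (deriv (deriv γ) s) (nor γ s))

/-- The biharmonic Green's function `G^B(x,y) = (1/(8π))‖x−y‖² log‖x−y‖`. -/
def GB (x y : ℝ × ℝ) : ℝ :=
  1 / (8 * π) * dot2 (x - y) (x - y) * Real.log (Real.sqrt (dot2 (x - y) (x - y)))

/-- Directional derivative in the first argument, in the direction `v`. -/
def ddx (v : ℝ × ℝ) (f : ℝ × ℝ → ℝ × ℝ → ℝ) (x y : ℝ × ℝ) : ℝ :=
  deriv (fun e : ℝ => f (x + e • v) y) 0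

/-- Directional derivative in the second argument, in the direction `v`. -/
def ddy (v : ℝ × ℝ) (f : ℝ × ℝ → ℝ × ℝ → ℝ) (x y : ℝ × ℝ) : ℝ :=
  deriv (fun e : ℝ => f x (y + e • v)) 0

/-- The kernel `K^{H′}(x, γ(s'))` of the arc-length derivative of the Hilbert transform,
with `r = x − γ(s')` and target tangent direction `τ(t)`. -/
def KHp (γ : ℝ → ℝ × ℝ) (t : ℝ) (x : ℝ × ℝ) (s' : ℝ) : ℝ :=
  1 / π * dot2 (tang γ s') (tang γ t) / dot2 (x - γ s') (x - γ s')
    - 2 / π * dot2 (x - γ s') (tang γ t) * dot2 (x - γ s') (tang γ s')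
      / (dot2 (x - γ s') (x - γ s')) ^ 2

def perp (v : ℝ × ℝ) : ℝ × ℝ := (v.2, -v.1)

lemma nor_eq_perp (γ : ℝ → ℝ × ℝ) (s : ℝ) : nor γ s = perp (tang γ s) := rfl

lemma dot2_comm (u v : ℝ × ℝ) : dot2 u v = dot2 v u := by
  simp only [dot2]; ring

lemma dot2_self_nonneg (w : ℝ × ℝ) : 0 ≤ dot2 w w :=
  add_nonneg (mul_self_nonneg _) (mul_self_nonneg _)

lemma dot2_self_pos {w : ℝ × ℝ} (hw : w ≠ 0) : 0 < dot2 w w := by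
  refine (dot2_self_nonneg w).lt_of_ne' fun h => hw ?_
  simp only [dot2] at h
  ext <;> simp only [Prod.fst_zero, Prod.snd_zero] <;>
    nlinarith [mul_self_nonneg w.1, mul_self_nonneg w.2]

lemma dot2_perp_perp (u v : ℝ × ℝ) : dot2 (perp u) (perp v) = dot2 u v := by
  simp only [dot2, perp]; ring

lemma dot2_perp_left (u v : ℝ × ℝ) : dot2 (perp u) v = -dot2 u (perp v) := by
  simp only [dot2, perp]; ring

lemma dot2_perp_self (u : ℝ × ℝ) : dot2 u (perp u) = 0 := by
  simp only [dot2, perp]; ring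

lemma dot2_eq_frame {τ : ℝ × ℝ} (hτ : dot2 τ τ = 1) (u v : ℝ × ℝ) :
    dot2 u v = dot2 u τ * dot2 v τ + dot2 u (perp τ) * dot2 v (perp τ) := by
  simp only [dot2, perp] at hτ ⊢
  linear_combination (-(u.1 * v.1 + u.2 * v.2)) * hτ

theorem HasDerivAt.dot2 {f g : ℝ → ℝ × ℝ} {f' g' : ℝ × ℝ} {x : ℝ} (hf : HasDerivAt f f' x)
    (hg : HasDerivAt g g' x) :
    HasDerivAt (fun s => dot2 (f s) (g s)) (dot2 f' (g x) + dot2 (f x) g') x := by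
  have fst {h : ℝ → ℝ × ℝ} {h'} (hh : HasDerivAt h h' x) : HasDerivAt (fun s => (h s).1) h'.1 x :=
    (ContinuousLinearMap.fst ℝ ℝ ℝ).hasFDerivAt.comp_hasDerivAt x hh
  have snd {h : ℝ → ℝ × ℝ} {h'} (hh : HasDerivAt h h' x) : HasDerivAt (fun s => (h s).2) h'.2 x :=
    (ContinuousLinearMap.snd ℝ ℝ ℝ).hasFDerivAt.comp_hasDerivAt x hh
  refine (((fst hf).fun_mul (fst hg)).fun_add ((snd hf).fun_mul (snd hg))).congr_deriv ?_
  simp only [_root_.dot2]; ring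

section Green

lemma hasDerivAt_line (w v : ℝ × ℝ) : HasDerivAt (fun e : ℝ => w + e • v) v 0 := by
  simpa using ((hasDerivAt_id (0 : ℝ)).smul_const v).const_add w

lemma hasDerivAt_dot2_line (w v u : ℝ × ℝ) :
    HasDerivAt (fun e : ℝ => dot2 (w + e • v) u) (dot2 v u) 0 := by
  simpa [dot2] using (hasDerivAt_line w v).dot2 (hasDerivAt_const 0 u)

lemma hasDerivAt_dot2_self_line (w v : ℝ × ℝ) :
    HasDerivAt (fun e : ℝ => dot2 (w + e • v) (w + e • v)) (2 * dot2 w v) 0 := by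
  refine ((hasDerivAt_line w v).dot2 (hasDerivAt_line w v)).congr_deriv ?_
  simp only [zero_smul, add_zero, dot2]; ring

lemma GB_sub_zero (x y : ℝ × ℝ) : GB (x - y) 0 = GB x y := by
  rw [GB, GB, sub_zero]

lemma GB_zero_right (w : ℝ × ℝ) :
    GB w 0 = 1 / (16 * π) * (dot2 w w * Real.log (dot2 w w)) := by
  rw [GB, sub_zero, Real.log_sqrt (dot2_self_nonneg _)]
  ring

/-! `gbDeriv4 c b a v w` is `∂_c ∂_b ∂_a ∂_v (GB · 0) (w)` for `w ≠ 0`, and similarly for the lower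
ones. -/

def gbDeriv1 (v w : ℝ × ℝ) : ℝ :=
  1 / (16 * π) * (2 * dot2 w v * (Real.log (dot2 w w) + 1))

def gbDeriv2 (a v w : ℝ × ℝ) : ℝ :=
  1 / (16 * π) * (2 * dot2 a v * (Real.log (dot2 w w) + 1)
    + 4 * dot2 w a * dot2 w v / dot2 w w)

def gbDeriv3 (b a v w : ℝ × ℝ) : ℝ :=
  1 / (16 * π) * (4 * (dot2 b a * dot2 w v + dot2 b v * dot2 w a + dot2 a v * dot2 w b) / dot2 w w
    - 8 * (dot2 w b * dot2 w a * dot2 w v) / (dot2 w w) ^ 2)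

def gbDeriv4 (c b a v w : ℝ × ℝ) : ℝ :=
  1 / (16 * π) * (4 * (dot2 c b * dot2 a v + dot2 c a * dot2 b v + dot2 c v * dot2 b a) / dot2 w w
    - 8 * (dot2 c b * dot2 w a * dot2 w v + dot2 c a * dot2 w b * dot2 w v
        + dot2 c v * dot2 w b * dot2 w a + dot2 b a * dot2 w c * dot2 w v
        + dot2 b v * dot2 w c * dot2 w a + dot2 a v * dot2 w c * dot2 w b) / (dot2 w w) ^ 2
    + 32 * (dot2 w c * dot2 w b * dot2 w a * dot2 w v) / (dot2 w w) ^ 3)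

variable {w : ℝ × ℝ} (v : ℝ × ℝ)

lemma hasDerivAt_GB_line (hw : w ≠ 0) :
    HasDerivAt (fun e : ℝ => GB (w + e • v) 0) (gbDeriv1 v w) 0 := by
  simp only [GB_zero_right]
  have hq := (dot2_self_pos hw).ne'
  have hP := hasDerivAt_dot2_self_line w v
  refine (hP.fun_mul (hP.log (by simpa using hq))).const_mul (1 / (16 * π)) |>.congr_deriv ?_
  simp only [gbDeriv1, zero_smul, add_zero]
  field_simp

lemma hasDerivAt_gbDeriv1_line (u : ℝ × ℝ) (hw : w ≠ 0) :
    HasDerivAt (fun e : ℝ => gbDeriv1 u (w + e • v)) (gbDeriv2 v u w) 0 := by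
  have hq := (dot2_self_pos hw).ne'
  have hP := hasDerivAt_dot2_self_line w v
  refine (((hasDerivAt_dot2_line w v u).const_mul 2).fun_mul
    ((hP.log (by simpa using hq)).add_const 1)).const_mul (1 / (16 * π)) |>.congr_deriv ?_
  simp only [gbDeriv2, zero_smul, add_zero]
  field_simp
  ring

lemma hasDerivAt_gbDeriv2_line (u u' : ℝ × ℝ) (hw : w ≠ 0) :
    HasDerivAt (fun e : ℝ => gbDeriv2 u u' (w + e • v)) (gbDeriv3 v u u' w) 0 := by
  have hq := (dot2_self_pos hw).ne'
  have hP := hasDerivAt_dot2_self_line w v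
  refine ((((hP.log (by simpa using hq)).add_const 1).const_mul (2 * dot2 u u')).fun_add
    ((((hasDerivAt_dot2_line w v u).const_mul 4).fun_mul (hasDerivAt_dot2_line w v u')).fun_div hP
      (by simpa using hq))).const_mul (1 / (16 * π)) |>.congr_deriv ?_
  simp only [gbDeriv3, zero_smul, add_zero]
  field_simp
  ring

lemma hasDerivAt_gbDeriv3_line (u u' u'' : ℝ × ℝ) (hw : w ≠ 0) :
    HasDerivAt (fun e : ℝ => gbDeriv3 u u' u'' (w + e • v)) (gbDeriv4 v u u' u'' w) 0 := by
  have hq := (dot2_self_pos hw).ne'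
  have hP := hasDerivAt_dot2_self_line w v
  have hL := hasDerivAt_dot2_line w v
  have h1 := ((((hL u'').const_mul (dot2 u u')).fun_add ((hL u').const_mul (dot2 u u''))).fun_add
      ((hL u).const_mul (dot2 u' u''))).const_mul 4 |>.fun_div hP (by simpa using hq)
  have h2 := (((hL u).fun_mul (hL u')).fun_mul (hL u'')).const_mul 8 |>.fun_div (hP.fun_pow 2)
      (by simpa using hq)
  refine (h1.fun_sub h2).const_mul (1 / (16 * π)) |>.congr_deriv ?_
  simp only [gbDeriv4, zero_smul, add_zero]
  field_simp
  ring

end Green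

section DirectionalDerivatives

lemma ddx_eq_of_forall_ne {f : ℝ × ℝ → ℝ × ℝ → ℝ} {F G : ℝ × ℝ → ℝ} {a : ℝ × ℝ}
    (hf : ∀ x y, x ≠ y → f x y = F (x - y))
    (hF : ∀ w, w ≠ 0 → HasDerivAt (fun e : ℝ => F (w + e • a)) (G w) 0)
    {x y : ℝ × ℝ} (h : x ≠ y) : ddx a f x y = G (x - y) := by
  have hne : ∀ᶠ e : ℝ in 𝓝 0, x + e • a ≠ y :=
    (continuous_const.add (continuous_id.smul continuous_const)).continuousAt.eventually_ne
      (by simpa using h)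
  have hev : (fun e : ℝ => f (x + e • a) y) =ᶠ[𝓝 0] fun e => F (x - y + e • a) := by
    filter_upwards [hne] with e he
    rw [hf _ _ he, sub_add_eq_add_sub]
  rw [ddx, hev.deriv_eq, (hF _ (sub_ne_zero.mpr h)).deriv]

variable (m : ℝ × ℝ) {x y : ℝ × ℝ}

lemma ddy_GB (h : x ≠ y) : ddy m GB x y = -gbDeriv1 m (x - y) := by
  have hfun : (fun e : ℝ => GB x (y + e • m)) = fun e : ℝ => GB (x - y + e • -m) 0 := by
    funext e
    rw [smul_neg, ← sub_eq_add_neg, ← sub_add_eq_sub_sub, GB_sub_zero]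
  rw [ddy, hfun, (hasDerivAt_GB_line (-m) (sub_ne_zero.mpr h)).deriv]
  simp only [gbDeriv1, dot2, Prod.fst_neg, Prod.snd_neg]
  ring

lemma ddx_ddy_GB (a : ℝ × ℝ) (h : x ≠ y) : ddx a (ddy m GB) x y = -gbDeriv2 a m (x - y) :=
  ddx_eq_of_forall_ne (F := (-gbDeriv1 m ·)) (fun _ _ hxy => ddy_GB m hxy)
    (fun _ hw => (hasDerivAt_gbDeriv1_line a m hw).fun_neg) h

lemma ddx_ddx_ddy_GB (b a : ℝ × ℝ) (h : x ≠ y) :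
    ddx b (ddx a (ddy m GB)) x y = -gbDeriv3 b a m (x - y) :=
  ddx_eq_of_forall_ne (F := (-gbDeriv2 a m ·)) (fun _ _ hxy => ddx_ddy_GB m a hxy)
    (fun _ hw => (hasDerivAt_gbDeriv2_line b a m hw).fun_neg) h

lemma ddx_ddx_ddx_ddy_GB (c b a : ℝ × ℝ) (h : x ≠ y) :
    ddx c (ddx b (ddx a (ddy m GB))) x y = -gbDeriv4 c b a m (x - y) :=
  ddx_eq_of_forall_ne (F := (-gbDeriv3 b a m ·)) 
    (fun _ _ hxy => ddx_ddx_ddy_GB m b a hxy)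
    (fun _ hw => (hasDerivAt_gbDeriv3_line c b a m hw).fun_neg) h

end DirectionalDerivatives

/-- The kernel of the theorem, with `x = γ(t)`, `y = γ(t+s)`, `τ = τ(t)`, `τ' = τ(t+s)` and
`β = (1 + ν) / 2`. -/
def plateKernel (ν κ : ℝ) (τ τ' x y : ℝ × ℝ) : ℝ :=
  ddx (perp τ) (ddx (perp τ) (ddx (perp τ) (ddy (perp τ') GB))) x y
    + (2 - ν) * ddx (perp τ) (ddx τ (ddx τ (ddy (perp τ') GB))) x y
    + (1 - ν) * κ * (ddx τ (ddx τ (ddy (perp τ') GB)) x y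
      - ddx (perp τ) (ddx (perp τ) (ddy (perp τ') GB)) x y)
    - (1 + ν) / 2 / 2 * (1 / π * dot2 τ' τ / dot2 (x - y) (x - y)
      - 2 / π * dot2 (x - y) τ * dot2 (x - y) τ' / (dot2 (x - y) (x - y)) ^ 2)

/-- Numerator of `plateKernel` in the coordinates `x - y = s a τ + s² b (perp τ)`,
`τ' = c τ + s d (perp τ)`. -/
def plateKernelNumerator (s κ a b c d : ℝ) : ℝ :=
  -24 * a ^ 2 * b ^ 2 * c + 16 * κ * a ^ 4 * b * c + 8 * s ^ 2 * b ^ 4 * c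
    - 32 * s ^ 2 * a * b ^ 3 * d + 16 * s ^ 2 * κ * a ^ 2 * b ^ 3 * c
    + 16 * s ^ 2 * κ * a ^ 3 * b ^ 2 * d + 16 * s ^ 4 * κ * a * b ^ 4 * d

lemma plateKernel_eq (ν κ : ℝ) {τ τ' x y : ℝ × ℝ} (hτ : dot2 τ τ = 1) (hxy : x ≠ y) {s : ℝ}
    (hs : s ≠ 0) :
    plateKernel ν κ τ τ' x y = (1 - ν) / (16 * π) *
      plateKernelNumerator s κ (dot2 (x - y) τ / s) (dot2 (x - y) (perp τ) / s ^ 2)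
        (dot2 τ' τ) (dot2 τ' (perp τ) / s)
      / ((dot2 (x - y) τ / s) ^ 2 + s ^ 2 * (dot2 (x - y) (perp τ) / s ^ 2) ^ 2) ^ 3 := by
  rw [plateKernel, ddx_ddx_ddx_ddy_GB _ _ _ _ hxy, ddx_ddx_ddx_ddy_GB _ _ _ _ hxy,
    ddx_ddx_ddy_GB _ _ _ hxy, ddx_ddx_ddy_GB _ _ _ hxy]
  have hw : x - y ≠ 0 := sub_ne_zero.mpr hxy
  set w := x - y
  have hww := dot2_eq_frame hτ w w
  have hwτ' := dot2_eq_frame hτ w τ'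
  have hwn' := dot2_eq_frame hτ w (perp τ')
  have hnn : dot2 (perp τ) (perp τ) = 1 := by rw [dot2_perp_perp, hτ]
  have hnτ : dot2 (perp τ) τ = 0 := by rw [dot2_perp_left, dot2_perp_self, neg_zero]
  have hnn' : dot2 (perp τ) (perp τ') = dot2 τ' τ := by rw [dot2_perp_perp, dot2_comm]
  have hτn' : dot2 τ (perp τ') = -dot2 τ' (perp τ) := by
    rw [← dot2_perp_left, dot2_perp_left, dot2_comm, dot2_perp_left]
  rw [dot2_comm (perp τ') τ, hτn', dot2_comm (perp τ') (perp τ), hnn'] at hwn'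
  have hq : dot2 w τ ^ 2 + dot2 w (perp τ) ^ 2 ≠ 0 := by
    have := (dot2_self_pos hw).ne'
    rwa [hww, ← sq, ← sq] at this
  simp only [gbDeriv4, gbDeriv3, plateKernelNumerator, hnn, hnτ, hnn', hτn', hτ, hwτ', hwn']
  rw [hww]
  field_simp
  ring

section Curve

lemma dot2_sub_left (u v w : ℝ × ℝ) : dot2 (u - v) w = dot2 u w - dot2 v w := by
  simp only [dot2, Prod.fst_sub, Prod.snd_sub]; ring

lemma continuous_dot2_left (u : ℝ × ℝ) : Continuous fun v => dot2 v u := by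
  unfold dot2; fun_prop

lemma tendsto_dot2_slope_zero {f : ℝ → ℝ × ℝ} {f' : ℝ × ℝ} {t : ℝ}
    (hf : HasDerivAt f f' t) (u : ℝ × ℝ) :
    Tendsto (fun s => dot2 (f (t + s) - f t) u / s) (𝓝[≠] 0) (𝓝 (dot2 f' u)) := by
  have h := (hf.dot2 (hasDerivAt_const t u)).tendsto_slope_zero
  simp only [smul_eq_mul] at h
  convert h using 2 with s
  · rw [dot2_sub_left, div_eq_inv_mul]
  · simp [dot2]

variable {γ : ℝ → ℝ × ℝ} {t : ℝ}

lemma tendsto_dot2_chord_tang_div (hγ : DifferentiableAt ℝ γ t) :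
    Tendsto (fun s => dot2 (γ t - γ (t + s)) (tang γ t) / s) (𝓝[≠] 0)
      (𝓝 (-dot2 (tang γ t) (tang γ t))) := by
  convert (tendsto_dot2_slope_zero hγ.hasDerivAt (tang γ t)).neg using 2 with s
  · rw [← neg_sub, dot2, dot2]
    simp only [Prod.fst_neg, Prod.snd_neg]
    ring
  · rfl

lemma tendsto_dot2_tang_tang (hγ : ContinuousAt (deriv γ) t) :
    Tendsto (fun s => dot2 (tang γ (t + s)) (tang γ t)) (𝓝[≠] 0)
      (𝓝 (dot2 (tang γ t) (tang γ t))) := by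
  have h : Tendsto (fun s => deriv γ (t + s)) (𝓝 0) (𝓝 (deriv γ t)) :=
    hγ.tendsto.comp (by simpa using (continuous_const_add t).tendsto 0)
  exact ((continuous_dot2_left _).tendsto _).comp (h.mono_left nhdsWithin_le_nhds)

lemma tendsto_dot2_tang_nor_div (hγ : DifferentiableAt ℝ (deriv γ) t) :
    Tendsto (fun s => dot2 (tang γ (t + s)) (nor γ t) / s) (𝓝[≠] 0) (𝓝 (-curv γ t)) := by
  convert tendsto_dot2_slope_zero hγ.hasDerivAt (nor γ t) using 2 with s
  · rw [dot2_sub_left, tang, nor_eq_perp, tang, dot2_perp_self, sub_zero]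
  · rw [curv, neg_neg]

lemma tendsto_dot2_chord_nor_div_sq (hγ : Differentiable ℝ γ)
    (hγ' : DifferentiableAt ℝ (deriv γ) t) :
    Tendsto (fun s => dot2 (γ t - γ (t + s)) (nor γ t) / s ^ 2) (𝓝[≠] 0)
      (𝓝 (curv γ t / 2)) := by
  have hf : ∀ s, HasDerivAt (fun s => dot2 (γ t - γ (t + s)) (nor γ t))
      (-dot2 (tang γ (t + s)) (nor γ t)) s := by
    intro s
    refine ((((hγ (t + s)).hasDerivAt.comp_const_add t s).const_sub (γ t)).dot2
      (hasDerivAt_const s (nor γ t))).congr_deriv ?_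
    simp only [dot2, tang, Prod.fst_neg, Prod.snd_neg, Prod.fst_zero, Prod.snd_zero]
    ring
  have hcont : Continuous fun s => dot2 (γ t - γ (t + s)) (nor γ t) :=
    continuous_iff_continuousAt.mpr fun s => (hf s).continuousAt
  refine HasDerivAt.lhopital_zero_nhdsNE (Eventually.of_forall hf)
    (Eventually.of_forall fun s => hasDerivAt_pow 2 s) ?_ ?_ ?_ ?_
  · filter_upwards [self_mem_nhdsWithin] with s hs
    simpa using hs
  · simpa [dot2] using hcont.continuousWithinAt (s := {0}ᶜ) (x := 0) |>.tendsto
  · simpa using ((continuous_pow 2).tendsto' (0 : ℝ) 0 (by simp)).mono_left nhdsWithin_le_nhds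
  · convert (tendsto_dot2_tang_nor_div hγ').neg.div_const 2 using 2 with s
    · simp only [Nat.cast_ofNat, Nat.add_one_sub_one, pow_one]
      ring
    · ring

end Curve

lemma tendsto_plateKernelNumerator_div {κ : ℝ} {a b c d : ℝ → ℝ}
    (ha : Tendsto a (𝓝[≠] 0) (𝓝 (-1))) (hb : Tendsto b (𝓝[≠] 0) (𝓝 (κ / 2)))
    (hc : Tendsto c (𝓝[≠] 0) (𝓝 1)) (hd : Tendsto d (𝓝[≠] 0) (𝓝 (-κ))) :
    Tendsto (fun s => plateKernelNumerator s κ (a s) (b s) (c s) (d s)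
      / (a s ^ 2 + s ^ 2 * b s ^ 2) ^ 3) (𝓝[≠] 0) (𝓝 (2 * κ ^ 2)) := by
  have hs : Tendsto (fun s : ℝ => s) (𝓝[≠] 0) (𝓝 0) := nhdsWithin_le_nhds
  have hcont : ContinuousAt (fun p : ℝ × ℝ × ℝ × ℝ × ℝ =>
      plateKernelNumerator p.1 κ p.2.1 p.2.2.1 p.2.2.2.1 p.2.2.2.2
        / (p.2.1 ^ 2 + p.1 ^ 2 * p.2.2.1 ^ 2) ^ 3) (0, -1, κ / 2, 1, -κ) := by
    unfold plateKernelNumerator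
    fun_prop (disch := norm_num)
  convert hcont.tendsto.comp (hs.prodMk_nhds (ha.prodMk_nhds (hb.prodMk_nhds (hc.prodMk_nhds hd))))
    using 2
  norm_num
  unfold plateKernelNumerator
  ring

theorem stmt8_general (γ : ℝ → ℝ × ℝ)
    (hγ : ContDiff ℝ (⊤ : ℕ∞) γ)
    (harc : ∀ s, dot2 (deriv γ s) (deriv γ s) = 1)
    (ν β : ℝ) (hβ : β = (1 + ν) / 2) (t : ℝ) :
    Tendsto
      (fun s : ℝ =>
        ddx (nor γ t) (ddx (nor γ t) (ddx (nor γ t)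
            (ddy (nor γ (t + s)) GB))) (γ t) (γ (t + s))
          + (2 - ν) * ddx (nor γ t) (ddx (tang γ t) (ddx (tang γ t)
              (ddy (nor γ (t + s)) GB))) (γ t) (γ (t + s))
          + (1 - ν) * curv γ t *
              (ddx (tang γ t) (ddx (tang γ t)
                  (ddy (nor γ (t + s)) GB)) (γ t) (γ (t + s))
                - ddx (nor γ t) (ddx (nor γ t)
                    (ddy (nor γ (t + s)) GB)) (γ t) (γ (t + s)))
          - β / 2 * KHp γ t (γ t) (t + s))
      (𝓝[≠] (0 : ℝ)) (𝓝 ((1 - ν) * (curv γ t) ^ 2 / (8 * π))) := by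
  subst hβ
  obtain ⟨hγ₁, hγ'⟩ := contDiff_infty_iff_deriv.mp hγ
  have hγ₂ := hγ'.differentiable (by simp)
  have hA := tendsto_dot2_chord_tang_div (hγ₁ t)
  have hC := tendsto_dot2_tang_tang (hγ₂ t).continuousAt
  rw [show dot2 (tang γ t) (tang γ t) = 1 from harc t] at hA hC
  have hne : ∀ᶠ s in 𝓝[≠] 0, γ t ≠ γ (t + s) := by
    filter_upwards [hA.eventually_ne (b₂ := 0) (by norm_num)] with s hs h
    simp [h, dot2] at hs
  have hlim := (tendsto_plateKernelNumerator_div hA (tendsto_dot2_chord_nor_div_sq hγ₁ (hγ₂ t))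
    hC (tendsto_dot2_tang_nor_div (hγ₂ t))).const_mul ((1 - ν) / (16 * π))
  rw [show (1 - ν) / (16 * π) * (2 * curv γ t ^ 2) = (1 - ν) * curv γ t ^ 2 / (8 * π) by
    field_simp; ring] at hlim
  refine hlim.congr' ?_
  filter_upwards [self_mem_nhdsWithin, hne] with s hs hγs
  exact (mul_div_assoc _ _ _).symm.trans (plateKernel_eq ν (curv γ t) (harc t) hγs hs).symm

theorem stmt8 (L : ℝ) (hL : 0 < L) (γ : ℝ → ℝ × ℝ)
    (hγ : ContDiff ℝ (⊤ : ℕ∞) γ)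
    (hper : ∀ s, γ (s + L) = γ s)
    (hinj : Set.InjOn γ (Set.Ico 0 L))
    (harc : ∀ s, dot2 (deriv γ s) (deriv γ s) = 1)
    (ν β : ℝ) (hβ : β = (1 + ν) / 2) (t : ℝ) :
    Tendsto
      (fun s : ℝ =>
        ddx (nor γ t) (ddx (nor γ t) (ddx (nor γ t)
            (ddy (nor γ (t + s)) GB))) (γ t) (γ (t + s))
          + (2 - ν) * ddx (nor γ t) (ddx (tang γ t) (ddx (tang γ t)
              (ddy (nor γ (t + s)) GB))) (γ t) (γ (t + s))
          + (1 - ν) * curv γ t *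
              (ddx (tang γ t) (ddx (tang γ t)
                  (ddy (nor γ (t + s)) GB)) (γ t) (γ (t + s))
                - ddx (nor γ t) (ddx (nor γ t)
                    (ddy (nor γ (t + s)) GB)) (γ t) (γ (t + s)))
          - β / 2 * KHp γ t (γ t) (t + s))
      (𝓝[≠] (0 : ℝ)) (𝓝 ((1 - ν) * (curv γ t) ^ 2 / (8 * π))) :=
  stmt8_general γ hγ harc ν β hβ t
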